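/- Let g ⊆ V × V be an edge set of a finite directed graph on vertex set V, let w ∈ V, and let e = ⟨u, v⟩ be an edge. If v ∈ RR(w, g), then RR(w, g ∪ {e}) = RR(w, g) ∪ RR(u, g); otherwise RR(w, g ∪ {e}) = RR(w, g). -/

import Mathlib

open scoped Classical

noncomputable section

/-- The set of nodes reachable from some node of `S` via edges of `g`
(every node reaches itself). -/
def Reach {V : Type*} (S : Finset V) (g : Finset (V × V)) : Set V :=
  {x | ∃ s ∈ S, Relation.ReflTransGen (fun a b => (a, b) ∈ g) s x}

/-- The reverse reachable set of `w` in `g`: all nodes `x` such that `w ∈ Reach({x}, g)`. -/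
def RR {V : Type*} (w : V) (g : Finset (V × V)) : Set V :=
  {x | w ∈ Reach {x} g}

/-! A path in `g ∪ {(u, v)}` that uses the new edge splits into a path in `g` up to the first
use of that edge and a path in `g` from `v` after its last use. -/

namespace Relation

variable {α : Type*} {r : α → α → Prop} {u v a b : α}

theorem reflTransGen_or_edge_iff :
    ReflTransGen (fun x y => r x y ∨ x = u ∧ y = v) a b ↔
      ReflTransGen r a b ∨ ReflTransGen r a u ∧ ReflTransGen r v b := by
  constructor
  · intro h
    induction h using ReflTransGen.head_induction_on with
    | refl => exact .inl .refl
    | head hac _ ih =>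
      rcases hac with hr | ⟨rfl, rfl⟩
      · exact ih.imp (.head hr) (And.imp_left (.head hr))
      · exact .inr ⟨.refl, ih.elim id And.right⟩
  · have lift : ∀ {x y}, ReflTransGen r x y →
        ReflTransGen (fun x y => r x y ∨ x = u ∧ y = v) x y :=
      ReflTransGen.mono (fun _ _ => Or.inl) _ _
    rintro (h | ⟨hau, hvb⟩)
    · exact lift h
    · exact (lift hau).trans (.head (.inr ⟨rfl, rfl⟩) (lift hvb))

end Relation

section

variable {V : Type*} {g : Finset (V × V)} {w u v x : V}

theorem mem_RR_iff : x ∈ RR w g ↔ Relation.ReflTransGen (fun a b => (a, b) ∈ g) x w := by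
  simp [RR, Reach]

theorem mem_RR_union_edge_iff [DecidableEq V] :
    x ∈ RR w (g ∪ {(u, v)}) ↔ x ∈ RR w g ∨ x ∈ RR u g ∧ v ∈ RR w g := by
  simp only [mem_RR_iff, Finset.mem_union, Finset.mem_singleton, Prod.mk.injEq]
  exact Relation.reflTransGen_or_edge_iff

end

theorem rr_insert_edge_general {V : Type*} [DecidableEq V]
    (g : Finset (V × V)) (w : V) (u v : V) :
    (v ∈ RR w g → RR w (g ∪ {(u, v)}) = RR w g ∪ RR u g) ∧
    (v ∉ RR w g → RR w (g ∪ {(u, v)}) = RR w g) := by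
  refine ⟨fun hv => ?_, fun hv => ?_⟩ <;> ext x <;> rw [mem_RR_union_edge_iff]
  · simp only [Set.mem_union, hv, and_true]
  · simp only [hv, and_false, or_false]

/-- Adding the edge `e = ⟨u,v⟩`: if `v ∈ RR(w, g)` then
`RR(w, g ∪ {e}) = RR(w, g) ∪ RR(u, g)`; otherwise `RR(w, g ∪ {e}) = RR(w, g)`. -/
theorem rr_insert_edge {V : Type*} [Fintype V] [DecidableEq V]
    (g : Finset (V × V)) (w : V) (u v : V) :
    (v ∈ RR w g → RR w (g ∪ {(u, v)}) = RR w g ∪ RR u g) ∧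
    (v ∉ RR w g → RR w (g ∪ {(u, v)}) = RR w g) :=
  rr_insert_edge_general g w u v
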